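/- The problem is EXP-SPT if and only if it is EXP-PT. -/

import Mathlib

open Filter Real Set Topology
open scoped ENNReal NNReal

noncomputable section

/-- The weighted eigenvalues `λ_{k,j}`: `1` if `j = 1`, and `γ_k · λ_j` if `j ≥ 2`. -/
def lamKJ (γ lam : ℕ → ℝ) (k j : ℕ) : ℝ := if j = 1 then 1 else γ k * lam j

/-- The information complexity `n(ε,d)`: the extended-natural cardinality of the set of
`d`-tuples of positive integers `(n_1,…,n_d)` with `λ_{1,n_1} ⋯ λ_{d,n_d} > ε²`. -/
def infoN (γ lam : ℕ → ℝ) (ε : ℝ) (d : ℕ) : ℕ∞ :=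
  {n : Fin d → ℕ | (∀ i, 1 ≤ n i) ∧ ε ^ 2 < ∏ i, lamKJ γ lam (i.1 + 1) (n i)}.encard

/-- EXP-SPT with a given exponent `p`: there is `C ≥ 0` with
`n(ε,d) ≤ C (1 + log ε⁻¹)^p` for all `d ≥ 1` and `ε ∈ (0,1]`. -/
def ExpSPTwith (γ lam : ℕ → ℝ) (p : ℝ) : Prop :=
  ∃ C : ℝ, 0 ≤ C ∧ ∀ d : ℕ, 1 ≤ d → ∀ ε : ℝ, 0 < ε → ε ≤ 1 →
    (infoN γ lam ε d : ℝ≥0∞) ≤ ENNReal.ofReal (C * (1 + Real.log ε⁻¹) ^ p)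

/-- Exponential strong polynomial tractability. -/
def ExpSPT (γ lam : ℕ → ℝ) : Prop := ∃ p : ℝ, 0 ≤ p ∧ ExpSPTwith γ lam p

/-- Exponential polynomial tractability: there are `C, q, p ≥ 0` with
`n(ε,d) ≤ C d^q (1 + log ε⁻¹)^p` for all `d ≥ 1` and `ε ∈ (0,1]`. -/
def ExpPT (γ lam : ℕ → ℝ) : Prop :=
  ∃ C q p : ℝ, 0 ≤ C ∧ 0 ≤ q ∧ 0 ≤ p ∧ ∀ d : ℕ, 1 ≤ d → ∀ ε : ℝ, 0 < ε → ε ≤ 1 →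
    (infoN γ lam ε d : ℝ≥0∞) ≤ ENNReal.ofReal (C * (d : ℝ) ^ q * (1 + Real.log ε⁻¹) ^ p)

/-- EXP-QPT with a given exponent `t`. -/
def ExpQPTwith (γ lam : ℕ → ℝ) (t : ℝ) : Prop :=
  ∃ C : ℝ, 0 ≤ C ∧ ∀ d : ℕ, 1 ≤ d → ∀ ε : ℝ, 0 < ε → ε ≤ 1 →
    (infoN γ lam ε d : ℝ≥0∞) ≤
      ENNReal.ofReal (C * Real.exp (t * (1 + Real.log d) * (1 + Real.log (1 + Real.log ε⁻¹))))

/-- Exponential quasi-polynomial tractability. -/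
def ExpQPT (γ lam : ℕ → ℝ) : Prop := ∃ t : ℝ, 0 ≤ t ∧ ExpQPTwith γ lam t

/-- Exponential `(s,t)`-weak tractability:
`log max(1, n(ε,d)) / (d^t + (1 + log ε⁻¹)^s) → 0` as `d + ε⁻¹ → ∞`
(in particular `n(ε,d)` is finite for all such `d, ε`). -/
def ExpSTWT (γ lam : ℕ → ℝ) (s t : ℝ) : Prop :=
  ∀ δ : ℝ, 0 < δ → ∃ T : ℝ, ∀ d : ℕ, 1 ≤ d → ∀ ε : ℝ, 0 < ε → ε ≤ 1 →
    T ≤ (d : ℝ) + ε⁻¹ →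
    ∃ N : ℕ, infoN γ lam ε d = (N : ℕ∞) ∧
      Real.log (max 1 (N : ℝ)) / ((d : ℝ) ^ t + (1 + Real.log ε⁻¹) ^ s) < δ

/-- `j(ε) = max { j ≥ 1 : λ_j > ε² }` (a well-defined maximum when `λ_j → 0`). -/
def jEps (lam : ℕ → ℝ) (ε : ℝ) : ℕ := sSup {j : ℕ | 1 ≤ j ∧ ε ^ 2 < lam j}

/-- `d(ε) = max { d ≥ 1 : γ_d > ε² }`, with `d(ε) = 0` if `γ_1 ≤ ε²`
(a well-defined maximum when `γ_d → 0`). -/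
def dEps (γ : ℕ → ℝ) (ε : ℝ) : ℕ := sSup {d : ℕ | 1 ≤ d ∧ ε ^ 2 < γ d}

/-!
The tuples with entries in `{1, 2}` show `n(ε', d) ≥ 2^d` as soon as `ε'² < (γ_d λ_2)^d`, and such
an `ε'` has `1 + log ε'⁻¹ ≤ d (2 + log λ_2⁻¹) (1 + log ε⁻¹)` whenever `γ_d > ε²`. Under EXP-PT this
gives `2^d ≤ C' d^(q+p) (1 + log ε⁻¹)^p`, so `γ_d > ε²` forces `d ≤ B (1 + log ε⁻¹)`. Beyond that
dimension every factor with `n_k ≥ 2` is at most `γ_k ≤ ε²`, so admissible tuples are padded by ones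
and `n(ε, d) = n(ε, min(d, B (1 + log ε⁻¹)))`; the EXP-PT bound at this dimension is EXP-SPT.
-/

/-- The set `A_{ε,d}` whose cardinality is `infoN γ lam ε d`. -/
def admissible (γ lam : ℕ → ℝ) (ε : ℝ) (d : ℕ) : Set (Fin d → ℕ) :=
  {n | (∀ i, 1 ≤ n i) ∧ ε ^ 2 < ∏ i, lamKJ γ lam (i.1 + 1) (n i)}

def ExpPTBound (γ lam : ℕ → ℝ) (C q p : ℝ) : Prop :=
  ∀ d : ℕ, 1 ≤ d → ∀ ε : ℝ, 0 < ε → ε ≤ 1 →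
    (infoN γ lam ε d : ℝ≥0∞) ≤ ENNReal.ofReal (C * (d : ℝ) ^ q * (1 + Real.log ε⁻¹) ^ p)

section Tractability

variable {γ lam : ℕ → ℝ}

@[simp]
theorem lamKJ_one (k : ℕ) : lamKJ γ lam k 1 = 1 := if_pos rfl

theorem lamKJ_of_ne_one {k j : ℕ} (hj : j ≠ 1) : lamKJ γ lam k j = γ k * lam j := if_neg hj

theorem lamKJ_nonneg {k j : ℕ} (hγ : 0 ≤ γ k) (hlam : 0 ≤ lam j) : 0 ≤ lamKJ γ lam k j := by
  unfold lamKJ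
  split_ifs <;> positivity

theorem lamKJ_le_one {k j : ℕ} (hγ1 : γ k ≤ 1) (hlam0 : 0 ≤ lam j)
    (hlam1 : lam j ≤ 1) : lamKJ γ lam k j ≤ 1 := by
  unfold lamKJ
  split_ifs
  exacts [le_rfl, mul_le_one₀ hγ1 hlam0 hlam1]

theorem lamKJ_le_of_ne_one {k j : ℕ} (hj : j ≠ 1) (hγ : 0 ≤ γ k) (hlam : lam j ≤ 1) :
    lamKJ γ lam k j ≤ γ k := by
  rw [lamKJ_of_ne_one hj]
  exact mul_le_of_le_one_right hγ hlam

theorem expPT_of_expSPT (h : ExpSPT γ lam) : ExpPT γ lam := by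
  obtain ⟨p, hp, C, hC, hbound⟩ := h
  refine ⟨C, 0, p, hC, le_rfl, hp, fun d hd ε hε0 hε1 => ?_⟩
  simpa only [Real.rpow_zero, mul_one] using hbound d hd ε hε0 hε1

theorem two_pow_le_infoN (hγ : AntitoneOn γ (Ici 1)) {d : ℕ} (hγd0 : 0 ≤ γ d) (hγd1 : γ d ≤ 1)
    (hlam2 : 0 ≤ lam 2) (hlam2_le : lam 2 ≤ 1) {ε : ℝ} (hε : ε ^ 2 < (γ d * lam 2) ^ d) :
    (2 ^ d : ℕ∞) ≤ infoN γ lam ε d := by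
  classical
  set S := Fintype.piFinset fun _ : Fin d => ({1, 2} : Finset ℕ)
  have hS : (S : Set (Fin d → ℕ)) ⊆ admissible γ lam ε d := by
    intro n hn
    simp only [S, Finset.mem_coe, Fintype.mem_piFinset, Finset.mem_insert,
      Finset.mem_singleton] at hn
    refine ⟨fun i => by rcases hn i with h | h <;> omega, hε.trans_le ?_⟩
    calc (γ d * lam 2) ^ d = ∏ _i : Fin d, γ d * lam 2 := by simp
      _ ≤ _ := Finset.prod_le_prod (fun _ _ => by positivity) fun i _ => ?_
    rcases hn i with h | h <;> rw [h]
    · rw [lamKJ_one]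
      exact mul_le_one₀ hγd1 hlam2 hlam2_le
    · rw [lamKJ_of_ne_one (by norm_num)]
      have hi := i.2
      exact mul_le_mul_of_nonneg_right
        (hγ (mem_Ici.mpr (by omega)) (mem_Ici.mpr (by omega)) (by omega)) hlam2
  calc (2 ^ d : ℕ∞) = (S : Set (Fin d → ℕ)).encard := by
        rw [Set.encard_coe_eq_coe_finsetCard, Fintype.card_piFinset_const]
        simp
    _ ≤ infoN γ lam ε d := Set.encard_le_encard hS

theorem eq_one_of_mem_admissible (hlam0 : ∀ j, 1 ≤ j → 0 ≤ lam j)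
    (hlam1 : ∀ j, 1 ≤ j → lam j ≤ 1) (hγ0 : ∀ k, 1 ≤ k → 0 ≤ γ k)
    (hγ1 : ∀ k, 1 ≤ k → γ k ≤ 1) {ε : ℝ} {d : ℕ} {n : Fin d → ℕ}
    (hn : n ∈ admissible γ lam ε d) {i : Fin d} (hi : γ (i.1 + 1) ≤ ε ^ 2) : n i = 1 := by
  by_contra hne
  have hprod : ∏ j, lamKJ γ lam (j.1 + 1) (n j) ≤ lamKJ γ lam (i.1 + 1) (n i) := by
    simpa using Finset.prod_le_prod_of_subset_of_le_one (Finset.subset_univ {i})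
      (fun j _ => lamKJ_nonneg (hγ0 _ j.1.succ_pos) (hlam0 _ (hn.1 j)))
      (fun j _ _ => lamKJ_le_one (hγ1 _ j.1.succ_pos)
        (hlam0 _ (hn.1 j)) (hlam1 _ (hn.1 j)))
  have hfac := lamKJ_le_of_ne_one (γ := γ) hne (hγ0 _ i.1.succ_pos) (hlam1 _ (hn.1 i))
  linarith [hn.2]

theorem infoN_le_infoN_of_gamma_le (hlam0 : ∀ j, 1 ≤ j → 0 ≤ lam j)
    (hlam1 : ∀ j, 1 ≤ j → lam j ≤ 1) (hγ0 : ∀ k, 1 ≤ k → 0 ≤ γ k)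
    (hγ1 : ∀ k, 1 ≤ k → γ k ≤ 1) {ε : ℝ} {D d : ℕ} (hD : D ≤ d)
    (hγ : ∀ i, D ≤ i → i < d → γ (i + 1) ≤ ε ^ 2) :
    infoN γ lam ε d ≤ infoN γ lam ε D := by
  obtain ⟨k, rfl⟩ := Nat.exists_eq_add_of_le hD
  have htail : ∀ n ∈ admissible γ lam ε (D + k), ∀ j : Fin k, n (Fin.natAdd D j) = 1 :=
    fun n hn j => eq_one_of_mem_admissible hlam0 hlam1 hγ0 hγ1 hn
      (hγ _ (by simp) (by simp))
  have hpad : admissible γ lam ε (D + k) ⊆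
      (fun m => Fin.append m fun _ : Fin k => 1) '' admissible γ lam ε D := by
    intro n hn
    refine ⟨fun i => n (Fin.castAdd k i), ⟨fun i => hn.1 _, ?_⟩, ?_⟩
    · simpa [Fin.prod_univ_add, htail n hn] using hn.2
    · conv_rhs => rw [← Fin.append_castAdd_natAdd (f := n)]
      simp only [htail n hn]
  calc infoN γ lam ε (D + k) ≤ _ := Set.encard_le_encard hpad
    _ ≤ infoN γ lam ε D := Set.encard_image_le _ _

theorem exists_le_mul_of_two_pow_le {K r p : ℝ} (hK : 0 ≤ K) (hp : 0 ≤ p) :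
    ∃ B : ℝ, 1 ≤ B ∧ ∀ (d : ℕ) (L : ℝ), 1 ≤ L →
      (2 : ℝ) ^ d ≤ K * (d : ℝ) ^ r * L ^ p → (d : ℝ) ≤ B * L := by
  set a := Real.log 2 / 2
  have ha : 0 < a := by positivity
  set k := ⌈r⌉₊
  set K' := K * k.factorial / a ^ k
  refine ⟨max 1 ((|Real.log K'| + p) / a), le_max_left _ _, fun d L hL h => ?_⟩
  rcases Nat.eq_zero_or_pos d with rfl | hd
  · simp only [CharP.cast_eq_zero]
    positivity
  -- `x ^ k / k! ≤ exp x` at `x = a d` bounds the polynomial factor by `2 ^ (d / 2)`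
  have hpoly : (d : ℝ) ^ r ≤ k.factorial / a ^ k * exp (a * d) := by
    calc (d : ℝ) ^ r ≤ (d : ℝ) ^ (k : ℝ) :=
          Real.rpow_le_rpow_of_exponent_le (by exact_mod_cast hd) (Nat.le_ceil r)
      _ = (a * d) ^ k / k.factorial * (k.factorial / a ^ k) := by
          rw [Real.rpow_natCast, mul_pow]
          field_simp
      _ ≤ exp (a * d) * (k.factorial / a ^ k) := by
          gcongr
          exact Real.pow_div_factorial_le_exp _ (by positivity) k
      _ = k.factorial / a ^ k * exp (a * d) := mul_comm _ _
  have hexp : exp (a * d) ≤ K' * L ^ p := by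
    refine le_of_mul_le_mul_right ?_ (exp_pos (a * d))
    calc exp (a * d) * exp (a * d) = (2 : ℝ) ^ d := by
          rw [← exp_add, ← Real.rpow_natCast, Real.rpow_def_of_pos two_pos]
          congr 1
          simp only [a]
          ring
      _ ≤ K * (d : ℝ) ^ r * L ^ p := h
      _ ≤ K * (k.factorial / a ^ k * exp (a * d)) * L ^ p := by gcongr
      _ = K' * L ^ p * exp (a * d) := by ring
  have hLp : 0 < L ^ p := by positivity
  have hK' : 0 < K' := pos_of_mul_pos_left ((exp_pos _).trans_le hexp) hLp.le
  have hlog : a * d ≤ Real.log K' + p * Real.log L := by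
    have := Real.log_le_log (exp_pos _) hexp
    rwa [Real.log_exp, Real.log_mul hK'.ne' hLp.ne', Real.log_rpow (by linarith)] at this
  have hlogL : Real.log L ≤ L := (Real.log_le_sub_one_of_pos (by linarith)).trans (by linarith)
  calc (d : ℝ) ≤ (|Real.log K'| + p) / a * L := by
        rw [div_mul_eq_mul_div, le_div_iff₀ ha]
        nlinarith [le_abs_self (Real.log K'), abs_nonneg (Real.log K')]
    _ ≤ max 1 ((|Real.log K'| + p) / a) * L := by gcongr; exact le_max_right _ _

theorem two_pow_le_of_expPTBound (hγ : AntitoneOn γ (Ici 1)) (hγ0 : ∀ k, 1 ≤ k → 0 < γ k)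
    (hγ1 : ∀ k, 1 ≤ k → γ k ≤ 1) (hlam2 : 0 < lam 2) (hlam2_le : lam 2 ≤ 1) {C q p : ℝ}
    (hC : 0 ≤ C) (hp : 0 ≤ p) (hPT : ExpPTBound γ lam C q p) {d : ℕ} (hd : 1 ≤ d) {ε : ℝ}
    (hε0 : 0 < ε) (hε1 : ε ≤ 1) (hε : ε ^ 2 < γ d) :
    (2 : ℝ) ^ d ≤
      C * (2 + Real.log (lam 2)⁻¹) ^ p * (d : ℝ) ^ (q + p) * (1 + Real.log ε⁻¹) ^ p := by
  set x := γ d * lam 2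
  have hx0 : 0 < x := mul_pos (hγ0 d hd) hlam2
  have hxd0 : 0 < x ^ d := pow_pos hx0 d
  have hxd1 : x ^ d ≤ 1 := pow_le_one₀ hx0.le (mul_le_one₀ (hγ1 d hd) hlam2.le hlam2_le)
  set ε' := x ^ d / 2 with hε'_def
  have hε'0 : 0 < ε' := by positivity
  have hε'1 : ε' ≤ 1 := by linarith
  have hε' : ε' ^ 2 < x ^ d := by rw [hε'_def]; nlinarith
  have hcount : (2 : ℝ) ^ d ≤ C * (d : ℝ) ^ q * (1 + Real.log ε'⁻¹) ^ p := by
    have h := (ENat.toENNReal_le.mpr (two_pow_le_infoN hγ (hγ0 d hd).le (hγ1 d hd) hlam2.le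
      hlam2_le hε')).trans (hPT d hd ε' hε'0 hε'1)
    exact_mod_cast (ENNReal.natCast_le_ofReal (by positivity)).mp (by simpa using h)
  have hlogε' : Real.log ε'⁻¹ = Real.log 2 - d * (Real.log (γ d) + Real.log (lam 2)) := by
    rw [Real.log_inv, Real.log_div hxd0.ne' two_ne_zero, Real.log_pow,
      Real.log_mul (hγ0 d hd).ne' hlam2.ne']
    ring
  have hlogγ : 2 * Real.log ε < Real.log (γ d) := by
    simpa [Real.log_pow] using Real.log_lt_log (by positivity) hε
  have hlogε : Real.log ε ≤ 0 := Real.log_nonpos hε0.le hε1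
  have hloglam : Real.log (lam 2) ≤ 0 := Real.log_nonpos hlam2.le hlam2_le
  have hlog2 : Real.log 2 ≤ 1 := by linarith [Real.log_le_sub_one_of_pos two_pos]
  have hd' : (1 : ℝ) ≤ d := by exact_mod_cast hd
  have hL' : 1 + Real.log ε'⁻¹ ≤ d * (2 + Real.log (lam 2)⁻¹) * (1 + Real.log ε⁻¹) := by
    rw [hlogε', Real.log_inv, Real.log_inv]
    nlinarith [mul_nonneg (sub_nonneg.mpr hd') (neg_nonneg.mpr hloglam),
      mul_nonneg (by linarith : (0 : ℝ) ≤ d) (mul_nonneg (neg_nonneg.mpr hloglam)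
        (neg_nonneg.mpr hlogε))]
  have hL'0 : 0 ≤ 1 + Real.log ε'⁻¹ := by
    linarith [Real.log_nonneg ((one_le_inv₀ hε'0).mpr hε'1)]
  calc (2 : ℝ) ^ d ≤ C * (d : ℝ) ^ q * (1 + Real.log ε'⁻¹) ^ p := hcount
    _ ≤ C * (d : ℝ) ^ q * (d * (2 + Real.log (lam 2)⁻¹) * (1 + Real.log ε⁻¹)) ^ p := by gcongr
    _ = _ := by
      have hc : 0 ≤ 2 + Real.log (lam 2)⁻¹ := by rw [Real.log_inv]; linarith
      have hL : 0 ≤ 1 + Real.log ε⁻¹ := by rw [Real.log_inv]; linarith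
      rw [Real.mul_rpow (by positivity) hL, Real.mul_rpow (by positivity) hc,
        Real.rpow_add (by positivity)]
      ring

theorem exists_dim_le_of_expPTBound (hγ : AntitoneOn γ (Ici 1)) (hγ0 : ∀ k, 1 ≤ k → 0 < γ k)
    (hγ1 : ∀ k, 1 ≤ k → γ k ≤ 1) (hlam2 : 0 < lam 2) (hlam2_le : lam 2 ≤ 1) {C q p : ℝ}
    (hC : 0 ≤ C) (hp : 0 ≤ p) (hPT : ExpPTBound γ lam C q p) :
    ∃ B : ℝ, 1 ≤ B ∧ ∀ ε : ℝ, 0 < ε → ε ≤ 1 → ∀ d : ℕ, 1 ≤ d → ε ^ 2 < γ d →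
      (d : ℝ) ≤ B * (1 + Real.log ε⁻¹) := by
  have hc : 0 ≤ 2 + Real.log (lam 2)⁻¹ := by
    linarith [Real.log_nonneg ((one_le_inv₀ hlam2).mpr hlam2_le)]
  obtain ⟨B, hB, hle⟩ := exists_le_mul_of_two_pow_le (r := q + p)
    (mul_nonneg hC (Real.rpow_nonneg hc p)) hp
  refine ⟨B, hB, fun ε hε0 hε1 d hd hε => hle d _ ?_ ?_⟩
  · linarith [Real.log_nonneg ((one_le_inv₀ hε0).mpr hε1)]
  · exact two_pow_le_of_expPTBound hγ hγ0 hγ1 hlam2 hlam2_le hC hp hPT hd hε0 hε1 hε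

theorem expSPTwith_of_expPTBound (hlam0 : ∀ j, 1 ≤ j → 0 ≤ lam j)
    (hlam1 : ∀ j, 1 ≤ j → lam j ≤ 1) (hγ0 : ∀ k, 1 ≤ k → 0 ≤ γ k)
    (hγ1 : ∀ k, 1 ≤ k → γ k ≤ 1) {C q p B : ℝ} (hC : 0 ≤ C) (hq : 0 ≤ q) (hB : 1 ≤ B)
    (hPT : ExpPTBound γ lam C q p)
    (hdim : ∀ ε : ℝ, 0 < ε → ε ≤ 1 → ∀ d : ℕ, 1 ≤ d → ε ^ 2 < γ d →
      (d : ℝ) ≤ B * (1 + Real.log ε⁻¹)) :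
    ExpSPTwith γ lam (p + q) := by
  refine ⟨C * B ^ q, by positivity, fun d hd ε hε0 hε1 => ?_⟩
  set L := 1 + Real.log ε⁻¹
  have hL : 1 ≤ L := by linarith [Real.log_nonneg ((one_le_inv₀ hε0).mpr hε1)]
  set D := min d ⌊B * L⌋₊
  have hD1 : 1 ≤ D := le_min hd (Nat.le_floor (by push_cast; nlinarith))
  have hDL : (D : ℝ) ≤ B * L :=
    (Nat.cast_le.mpr (min_le_right _ _)).trans (Nat.floor_le (by positivity))
  have htrunc : infoN γ lam ε d ≤ infoN γ lam ε D := by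
    refine infoN_le_infoN_of_gamma_le hlam0 hlam1 hγ0 hγ1 (min_le_left _ _) fun i hDi hid => ?_
    by_contra! hγi
    have : i + 1 ≤ ⌊B * L⌋₊ :=
      Nat.le_floor (by exact_mod_cast hdim ε hε0 hε1 (i + 1) (by omega) hγi)
    omega
  calc (infoN γ lam ε d : ℝ≥0∞) ≤ infoN γ lam ε D := ENat.toENNReal_le.mpr htrunc
    _ ≤ ENNReal.ofReal (C * (D : ℝ) ^ q * L ^ p) := hPT D hD1 ε hε0 hε1
    _ ≤ ENNReal.ofReal (C * B ^ q * L ^ (p + q)) := by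
      refine ENNReal.ofReal_le_ofReal ?_
      calc C * (D : ℝ) ^ q * L ^ p ≤ C * (B * L) ^ q * L ^ p := by gcongr
        _ = C * B ^ q * L ^ (p + q) := by
          rw [Real.mul_rpow (by positivity) (by positivity), Real.rpow_add (by positivity)]
          ring

end Tractability

/-- EXP-SPT holds iff EXP-PT holds. -/
theorem stmt1 (γ lam : ℕ → ℝ)
    (hlam_anti : AntitoneOn lam (Set.Ici 1)) (hlam1 : lam 1 = 1) (hlam2 : 0 < lam 2)
    (hlam_nonneg : ∀ j, 1 ≤ j → 0 ≤ lam j)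
    (hγ_anti : AntitoneOn γ (Set.Ici 1))
    (hγ_pos : ∀ j, 1 ≤ j → 0 < γ j) (hγ_le : ∀ j, 1 ≤ j → γ j ≤ 1) :
    ExpSPT γ lam ↔ ExpPT γ lam := by
  refine ⟨expPT_of_expSPT, fun ⟨C, q, p, hC, hq, hp, hPT⟩ => ?_⟩
  have hlam_le : ∀ j, 1 ≤ j → lam j ≤ 1 := fun j hj =>
    hlam1 ▸ hlam_anti (mem_Ici.mpr le_rfl) (mem_Ici.mpr hj) hj
  obtain ⟨B, hB, hdim⟩ := exists_dim_le_of_expPTBound hγ_anti hγ_pos hγ_le hlam2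
    (hlam_le 2 one_le_two) hC hp hPT
  exact ⟨p + q, by positivity, expSPTwith_of_expPTBound hlam_nonneg hlam_le
    (fun k hk => (hγ_pos k hk).le) hγ_le hC hq hB hPT hdim⟩
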